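/- arXiv:2604.00714 — 6 statements merged into one kernel-verified Lean document; each statement's English description precedes it below -/
import Mathlib

section
/- Let (X,+) be a commutative group, (Y,+) a group, and (S,+) a subsemigroup of (X,+) that generates X as a group. If g : S → Y is a semigroup homomorphism (g(s+t) = g(s) + g(t) for all s,t ∈ S), then there exists a unique group homomorphism f : X → Y such that f restricted to S equals g. -/
/-!
The images under `g` of elements of `S` commute, since `g a + g b = g (a + b) = g (b + a) = g b + g a`.
When `S` is nonempty, the differences `a - b` with `a, b ∈ S` form a subgroup containing `S`, hence
all of `X`, and by this commutativity `a - b ↦ g a - g b` is a well-defined homomorphism extending `g`.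
Uniqueness holds because `S` generates `X`.
-/

open Pointwise

section

variable {X Y : Type*} {S : Set X} {g : X → Y}

theorem addCommute_of_map_add [AddCommMagma X] [Add Y]
    (hg : ∀ a ∈ S, ∀ b ∈ S, g (a + b) = g a + g b) {a b : X} (ha : a ∈ S) (hb : b ∈ S) :
    AddCommute (g a) (g b) := by
  change g a + g b = g b + g a
  rw [← hg a ha b hb, ← hg b hb a ha, add_comm]

variable [AddCommGroup X] [AddGroup Y]

theorem map_sub_map_eq_of_sub_eq (hg : ∀ a ∈ S, ∀ b ∈ S, g (a + b) = g a + g b)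
    {a b c d : X} (ha : a ∈ S) (hb : b ∈ S) (hc : c ∈ S) (hd : d ∈ S) (h : a - b = c - d) :
    g a - g b = g c - g d := by
  have hbd := addCommute_of_map_add hg hb hd
  calc g a - g b = g (a + d) - g (b + d) := by
        rw [hg a ha d hd, hg b hb d hd, hbd.add_sub_add_comm (hbd.symm.neg_right), sub_self,
          add_zero]
    _ = g (c + b) - g (d + b) := by rw [sub_eq_sub_iff_add_eq_add.mp h, add_comm b d]
    _ = g c - g d := by
        rw [hg c hc b hb, hg d hd b hb, hbd.symm.add_sub_add_comm hbd.neg_right, sub_self,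
          add_zero]

theorem map_add_sub_map_add (hg : ∀ a ∈ S, ∀ b ∈ S, g (a + b) = g a + g b)
    {a b c d : X} (ha : a ∈ S) (hb : b ∈ S) (hc : c ∈ S) (hd : d ∈ S) :
    g (a + c) - g (b + d) = (g a - g b) + (g c - g d) := by
  rw [hg a ha c hc, hg b hb d hd]
  exact (addCommute_of_map_add hg hb hd).add_sub_add_comm
    (addCommute_of_map_add hg hc hb).neg_right

theorem mem_sub_of_mem_closure (hadd : ∀ a ∈ S, ∀ b ∈ S, a + b ∈ S) (hS : S.Nonempty) {x : X}
    (hx : x ∈ AddSubgroup.closure S) : x ∈ S - S := by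
  obtain ⟨s₀, hs₀⟩ := hS
  induction hx using AddSubgroup.closure_induction with
  | mem s hs => exact ⟨s + s₀, hadd s hs s₀ hs₀, s₀, hs₀, add_sub_cancel_right s s₀⟩
  | zero => exact ⟨s₀, hs₀, s₀, hs₀, sub_self s₀⟩
  | add _ _ _ _ hx hy =>
    obtain ⟨a, ha, b, hb, rfl⟩ := hx
    obtain ⟨c, hc, d, hd, rfl⟩ := hy
    exact ⟨a + c, hadd a ha c hc, b + d, hadd b hb d hd, add_sub_add_comm a c b d⟩
  | neg _ _ hx =>
    obtain ⟨a, ha, b, hb, rfl⟩ := hx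
    exact ⟨b, hb, a, ha, (neg_sub a b).symm⟩

theorem exists_addMonoidHom_eqOn (hadd : ∀ a ∈ S, ∀ b ∈ S, a + b ∈ S)
    (hgen : AddSubgroup.closure S = ⊤) (hg : ∀ a ∈ S, ∀ b ∈ S, g (a + b) = g a + g b) :
    ∃ f : X →+ Y, ∀ s ∈ S, f s = g s := by
  rcases S.eq_empty_or_nonempty with rfl | hS
  · exact ⟨0, fun _ hs => hs.elim⟩
  obtain ⟨s₀, hs₀⟩ := hS
  choose a ha b hb hab using fun x : X =>
    mem_sub_of_mem_closure hadd ⟨s₀, hs₀⟩ (hgen ▸ AddSubgroup.mem_top x)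
  beta_reduce at hab
  have hrepr : ∀ x, ∀ c ∈ S, ∀ d ∈ S, c - d = x → g (a x) - g (b x) = g c - g d :=
    fun x c hc d hd h => map_sub_map_eq_of_sub_eq hg (ha x) (hb x) hc hd ((hab x).trans h.symm)
  refine ⟨AddMonoidHom.mk' (fun x => g (a x) - g (b x)) fun x y => ?_, fun s hs => ?_⟩
  · rw [hrepr (x + y) _ (hadd _ (ha x) _ (ha y)) _ (hadd _ (hb x) _ (hb y))
      (by rw [add_sub_add_comm, hab x, hab y])]
    exact map_add_sub_map_add hg (ha x) (hb x) (ha y) (hb y)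
  · change g (a s) - g (b s) = g s
    rw [hrepr s _ (hadd s hs s₀ hs₀) s₀ hs₀ (add_sub_cancel_right s s₀), hg s hs s₀ hs₀,
      add_sub_cancel_right]

end

/-- If `S` is a subsemigroup of a commutative group `X` generating `X`, and
`g` is additive on `S` with values in a group `Y`, then `g` extends uniquely
to a group homomorphism `f : X →+ Y`. -/
theorem exists_unique_hom_extension_of_subsemigroup
    {X : Type*} [AddCommGroup X] {Y : Type*} [AddGroup Y]
    (S : Set X) (hadd : ∀ a ∈ S, ∀ b ∈ S, a + b ∈ S)
    (hgen : AddSubgroup.closure S = ⊤)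
    (g : X → Y) (hg : ∀ a ∈ S, ∀ b ∈ S, g (a + b) = g a + g b) :
    ∃! f : X →+ Y, ∀ s ∈ S, f s = g s := by
  obtain ⟨f, hf⟩ := exists_addMonoidHom_eqOn hadd hgen hg
  exact ⟨f, hf, fun f' hf' =>
    AddMonoidHom.eq_of_eqOn_dense hgen fun s hs => (hf' s hs).trans (hf s hs).symm⟩
end

section
/- Let n be a positive real number. If h : (0,n) → ℝ satisfies h(x+y) = h(x) + h(y) for all x,y ∈ (0,n) with x+y ∈ (0,n), and h is continuous at one point, then there exists c ∈ ℝ such that h(x) = c·x for all x ∈ (0,n). -/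
/-!
Translation carries continuity at one point to the whole interval: near `x + d` one has
`f z = f (z - d) + f d`, and near `x` one has `f z = f (z + d) - f d`. Additivity gives
`f (q * a) = q • f a` for positive rationals `q` with `q * a` in the interval, so `f` agrees
with the linear map `x ↦ x • (a⁻¹ • f a)` on a dense subset of the interval, hence everywhere
on it by continuity.
-/

open Set

def IsAdditiveOn {α β : Type*} [Add α] [Add β] (f : α → β) (s : Set α) : Prop :=
  ∀ x ∈ s, ∀ y ∈ s, x + y ∈ s → f (x + y) = f x + f y

namespace IsAdditiveOn

variable {n : ℝ}

section Continuity

variable {E : Type*} [AddCommGroup E] [TopologicalSpace E] [IsTopologicalAddGroup E] {f : ℝ → E}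

theorem continuousAt_add (hf : IsAdditiveOn f (Ioo 0 n)) {x d : ℝ} (hx : x ∈ Ioo 0 n)
    (hd : d ∈ Ioo 0 n) (hxd : x + d < n) (hfx : ContinuousAt f x) :
    ContinuousAt f (x + d) := by
  have hshift : ContinuousAt (fun z => f (z - d) + f d) (x + d) := by
    have hsub : ContinuousAt (fun z : ℝ => z - d) (x + d) := by fun_prop
    exact (hfx.comp_of_eq hsub (add_sub_cancel_right x d)).add continuousAt_const
  refine hshift.congr ?_
  filter_upwards [Ioo_mem_nhds (show d < x + d by linarith [hx.1]) hxd] with z hz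
  have := hf (z - d) ⟨by linarith [hz.1], by linarith [hz.2, hd.1]⟩ d hd
    (by rw [sub_add_cancel]; exact ⟨hd.1.trans hz.1, hz.2⟩)
  rw [sub_add_cancel] at this
  exact this.symm

theorem continuousAt_of_continuousAt_add (hf : IsAdditiveOn f (Ioo 0 n)) {x d : ℝ}
    (hx : x ∈ Ioo 0 n) (hd : d ∈ Ioo 0 n) (hxd : x + d < n) (hfxd : ContinuousAt f (x + d)) :
    ContinuousAt f x := by
  have hshift : ContinuousAt (fun z => f (z + d) - f d) x := by
    have hadd : ContinuousAt (fun z : ℝ => z + d) x := by fun_prop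
    exact (hfxd.comp_of_eq hadd rfl).sub continuousAt_const
  refine hshift.congr ?_
  filter_upwards [Ioo_mem_nhds hx.1 (show x < n - d by linarith)] with z hz
  rw [hf z ⟨hz.1, by linarith [hz.2, hd.1]⟩ d hd ⟨by linarith [hz.1, hd.1], by linarith [hz.2]⟩,
    add_sub_cancel_right]

theorem continuousOn_of_continuousAt (hf : IsAdditiveOn f (Ioo 0 n)) {x₀ : ℝ}
    (hx₀ : x₀ ∈ Ioo 0 n) (hc : ContinuousAt f x₀) : ContinuousOn f (Ioo 0 n) := by
  refine continuousOn_of_forall_continuousAt fun y hy => ?_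
  rcases lt_trichotomy x₀ y with hlt | rfl | hgt
  · have := hf.continuousAt_add hx₀ (d := y - x₀) ⟨sub_pos.2 hlt, by linarith [hx₀.1, hy.2]⟩
      (by linarith [hy.2]) hc
    rwa [add_sub_cancel] at this
  · exact hc
  · refine hf.continuousAt_of_continuousAt_add hy (d := x₀ - y)
      ⟨sub_pos.2 hgt, by linarith [hy.1, hx₀.2]⟩ (by linarith [hx₀.2]) ?_
    rwa [add_sub_cancel]

end Continuity

section Homogeneity

variable {E : Type*} [AddCommMonoid E] {f : ℝ → E}

theorem map_natCast_mul (hf : IsAdditiveOn f (Ioo 0 n)) {x : ℝ} (hx : 0 < x) {k : ℕ}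
    (hk : 1 ≤ k) (hkx : k * x < n) : f (k * x) = k • f x := by
  induction k, hk using Nat.le_induction with
  | base => simp
  | succ k hk ih =>
    have hk' : (1 : ℝ) ≤ k := by exact_mod_cast hk
    push_cast at hkx ⊢
    have hkx' : k * x < n := by nlinarith
    rw [add_mul, one_mul,
      hf _ ⟨by nlinarith, hkx'⟩ x ⟨hx, by nlinarith⟩ ⟨by nlinarith, by linarith⟩, ih hkx',
      succ_nsmul]

variable [Module ℝ E]

theorem map_ratCast_mul (hf : IsAdditiveOn f (Ioo 0 n)) {x : ℝ} (hx : x ∈ Ioo 0 n) {q : ℚ}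
    (hq : 0 < q) (hqx : q * x < n) : f (q * x) = (q : ℝ) • f x := by
  obtain ⟨p, hp⟩ := Int.eq_ofNat_of_zero_le (Rat.num_nonneg.2 hq.le)
  have hp1 : 1 ≤ p := by have := Rat.num_pos.2 hq; omega
  have hm : (0 : ℝ) < q.den := by positivity
  have hq' : (q : ℝ) = p / q.den := by rw [Rat.cast_def, hp, Int.cast_natCast]
  -- both `x` and `q * x` are natural multiples of `x / q.den`
  set t := x / q.den
  have ht : 0 < t := div_pos hx.1 hm
  have hx_eq : q.den * t = x := mul_div_cancel₀ x hm.ne'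
  have hqx_eq : p * t = q * x := by rw [hq']; ring
  have hfx : f x = q.den • f t := by
    rw [← hf.map_natCast_mul ht q.pos (hx_eq ▸ hx.2), hx_eq]
  rw [← hqx_eq, hf.map_natCast_mul ht hp1 (hqx_eq ▸ hqx), hfx, hq', ← Nat.cast_smul_eq_nsmul ℝ,
    ← Nat.cast_smul_eq_nsmul ℝ, smul_smul, div_mul_cancel₀ _ hm.ne']

end Homogeneity

theorem exists_eqOn_smul_const {E : Type*} [AddCommGroup E] [Module ℝ E] [TopologicalSpace E]
    [IsTopologicalAddGroup E] [ContinuousSMul ℝ E] [T2Space E] {f : ℝ → E}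
    (hf : IsAdditiveOn f (Ioo 0 n)) {a : ℝ} (ha : a ∈ Ioo 0 n) (hc : ContinuousAt f a) :
    ∃ c : E, EqOn f (fun x => x • c) (Ioo 0 n) := by
  refine ⟨a⁻¹ • f a, EqOn.of_subset_closure (s := Ioo 0 n ∩ range fun q : ℚ => (q : ℝ) * a)
    ?_ (hf.continuousOn_of_continuousAt ha hc) (by fun_prop) inter_subset_left ?_⟩
  · rintro _ ⟨hx, q, rfl⟩
    have hq : (0 : ℝ) < q := pos_of_mul_pos_left hx.1 ha.1.le
    dsimp only
    rw [hf.map_ratCast_mul ha (Rat.cast_pos.1 hq) hx.2, smul_smul, mul_assoc,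
      mul_inv_cancel₀ ha.1.ne', mul_one]
  · have hdense : DenseRange fun q : ℚ => (q : ℝ) * a :=
      (mul_right_surjective₀ ha.1.ne').denseRange.comp Rat.denseRange_cast (continuous_mul_const a)
    exact hdense.open_subset_closure_inter isOpen_Ioo

end IsAdditiveOn

theorem restricted_cauchy_linear_general
    (n : ℝ) (h : ℝ → ℝ)
    (hadd : ∀ x ∈ Set.Ioo 0 n, ∀ y ∈ Set.Ioo 0 n, x + y ∈ Set.Ioo 0 n →
      h (x + y) = h x + h y)
    (hcont : ∃ x₀ ∈ Set.Ioo 0 n, ContinuousWithinAt h (Set.Ioo 0 n) x₀) :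
    ∃ c : ℝ, ∀ x ∈ Set.Ioo 0 n, h x = c * x := by
  obtain ⟨x₀, hx₀, hcont⟩ := hcont
  rw [continuousWithinAt_iff_continuousAt (Ioo_mem_nhds hx₀.1 hx₀.2)] at hcont
  obtain ⟨c, hc⟩ := IsAdditiveOn.exists_eqOn_smul_const hadd hx₀ hcont
  exact ⟨c, fun x hx => (hc hx).trans (mul_comm x c)⟩

/-- Restricted-domain Cauchy functional equation: an additive function on
`(0,n)` that is continuous at one point of `(0,n)` is linear there. -/
theorem restricted_cauchy_linear
    (n : ℝ) (hn : 0 < n) (h : ℝ → ℝ)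
    (hadd : ∀ x ∈ Set.Ioo 0 n, ∀ y ∈ Set.Ioo 0 n, x + y ∈ Set.Ioo 0 n →
      h (x + y) = h x + h y)
    (hcont : ∃ x₀ ∈ Set.Ioo 0 n, ContinuousWithinAt h (Set.Ioo 0 n) x₀) :
    ∃ c : ℝ, ∀ x ∈ Set.Ioo 0 n, h x = c * x :=
  restricted_cauchy_linear_general n h hadd hcont
end

section
/- Every additive function h : (0,n) → ℝ on the restricted domain (satisfying h(x+y)=h(x)+h(y) whenever x,y,x+y ∈ (0,n)) extends to an additive function on (0,∞): if h(x+y)=h(x)+h(y) for all x,y ∈ (0,n) with x+y ∈ (0,n), then there exists f : (0,∞) → ℝ with f(x+y)=f(x)+f(y) for all x,y ∈ (0,∞) and f = h on (0,n). -/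
/-- Every additive function on the restricted domain `(0,n)` extends to an
additive function on `(0,∞)`. -/
theorem restricted_cauchy_extends
    (n : ℝ) (hn : 0 < n) (h : ℝ → ℝ)
    (hadd : ∀ x ∈ Set.Ioo 0 n, ∀ y ∈ Set.Ioo 0 n, x + y ∈ Set.Ioo 0 n →
      h (x + y) = h x + h y) :
    ∃ f : ℝ → ℝ, (∀ x > 0, ∀ y > 0, f (x + y) = f x + f y) ∧
      ∀ x ∈ Set.Ioo 0 n, f x = h x := by
  -- h scales by natural numbers within the domain
  have hsmul : ∀ k : ℕ, ∀ y : ℝ, 0 < y → ((k : ℝ) + 1) * y < n →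
      h (((k : ℝ) + 1) * y) = ((k : ℝ) + 1) * h y := by
    intro k
    induction k with
    | zero => intro y hy hlt; norm_num
    | succ k ih =>
      intro y hy hlt
      have hkpos : (0:ℝ) ≤ (k : ℝ) := Nat.cast_nonneg k
      push_cast at hlt ⊢
      have hk1 : ((k : ℝ) + 1) * y < n := by nlinarith
      have hyn : y < n := by nlinarith
      have hs : ((k : ℝ) + 1) * y + y ∈ Set.Ioo 0 n := by
        constructor
        · nlinarith
        · nlinarith
      have := hadd (((k : ℝ) + 1) * y) ⟨by positivity, hk1⟩ y ⟨hy, hyn⟩ hs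
      have h2 : h (((k : ℝ) + 1) * y) = ((k : ℝ) + 1) * h y := by
        have := ih y hy hk1
        convert this using 2
      have heq : ((k : ℝ) + 1 + 1) * y = ((k : ℝ) + 1) * y + y := by ring
      rw [heq, this, h2]; ring
  -- scaling in the form needed
  have hscale : ∀ m : ℕ, 0 < m → ∀ y : ℝ, 0 < y → (m : ℝ) * y < n →
      h ((m : ℝ) * y) = (m : ℝ) * h y := by
    intro m hm y hy hlt
    obtain ⟨k, rfl⟩ := Nat.exists_eq_add_of_lt hm
    have : ((0 + k + 1 : ℕ) : ℝ) = (k : ℝ) + 1 := by push_cast; ring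
    rw [this] at hlt ⊢
    exact hsmul k y hy hlt
  -- well-definedness
  have key : ∀ m m' : ℕ, 0 < m → 0 < m' → ∀ x : ℝ, 0 < x → x / m < n → x / m' < n →
      (m : ℝ) * h (x / m) = (m' : ℝ) * h (x / m') := by
    have half : ∀ m m' : ℕ, 0 < m → 0 < m' → ∀ x : ℝ, 0 < x → x / m < n →
        (m : ℝ) * h (x / m) = ((m * m' : ℕ) : ℝ) * h (x / (m * m' : ℕ)) := by
      intro m m' hm hm' x hx hlt
      have hmR : (0:ℝ) < m := by exact_mod_cast hm
      have hm'R : (0:ℝ) < m' := by exact_mod_cast hm'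
      have hrw : x / m = (m' : ℝ) * (x / ((m * m' : ℕ) : ℝ)) := by
        push_cast; field_simp
      have hy : 0 < x / ((m * m' : ℕ) : ℝ) := by
        push_cast; positivity
      have := hscale m' hm' (x / ((m * m' : ℕ) : ℝ)) hy (by rw [← hrw]; exact hlt)
      rw [hrw, this]; push_cast; ring
    intro m m' hm hm' x hx hlt hlt'
    have h1 := half m m' hm hm' x hx hlt
    have h2 := half m' m hm' hm x hx hlt'
    rw [h1, h2, Nat.mul_comm]
  -- the extension
  set f : ℝ → ℝ := fun x => ((⌈x / n⌉₊ + 1 : ℕ) : ℝ) * h (x / ((⌈x / n⌉₊ + 1 : ℕ) : ℝ)) with hf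
  have hvalid : ∀ x : ℝ, 0 < x → x / ((⌈x / n⌉₊ + 1 : ℕ) : ℝ) < n := by
    intro x hx
    have h1 : x / n ≤ (⌈x / n⌉₊ : ℝ) := Nat.le_ceil _
    have h2 : (0:ℝ) < ((⌈x / n⌉₊ + 1 : ℕ) : ℝ) := by positivity
    rw [div_lt_iff₀ h2]
    have h3 : x ≤ (⌈x / n⌉₊ : ℝ) * n := (div_le_iff₀ hn).mp h1
    push_cast
    nlinarith
  have hfeq : ∀ m : ℕ, 0 < m → ∀ x : ℝ, 0 < x → x / m < n → f x = (m : ℝ) * h (x / m) := by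
    intro m hm x hx hlt
    exact key (⌈x / n⌉₊ + 1) m (Nat.succ_pos _) hm x hx (hvalid x hx) hlt
  refine ⟨f, ?_, ?_⟩
  · intro x hx y hy
    set M : ℕ := ⌈(x + y) / n⌉₊ + 1 with hM
    have hMpos : 0 < M := Nat.succ_pos _
    have hMR : (0:ℝ) < (M : ℝ) := by exact_mod_cast hMpos
    have hxy : (x + y) / M < n := hvalid (x + y) (by linarith)
    have hxM : x / M < n := lt_of_le_of_lt (by gcongr; linarith) hxy
    have hyM : y / M < n := lt_of_le_of_lt (by gcongr; linarith) hxy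
    rw [hfeq M hMpos (x + y) (by linarith) hxy, hfeq M hMpos x hx hxM,
        hfeq M hMpos y hy hyM]
    have hsum : (x + y) / M = x / M + y / M := add_div x y M
    have hxMpos : 0 < x / (M:ℝ) := by positivity
    have hyMpos : 0 < y / (M:ℝ) := by positivity
    have := hadd (x / M) ⟨hxMpos, hxM⟩ (y / M) ⟨hyMpos, hyM⟩
      (by rw [← hsum]; exact ⟨by positivity, hxy⟩)
    rw [hsum, this]; ring
  · intro x hx
    have := hfeq 1 one_pos x hx.1 (by simpa using hx.2)
    simpa using this
end

section
/- There is no function f : (0,∞) → [0,∞) that is additive (f(α+β) = f(α) + f(β) for all α,β > 0), satisfies f(1) = 1, and is discontinuous at some point. -/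
/-- Aczél–Erdős phenomenon: there is no additive non-negative function on
`(0,∞)` with `f 1 = 1` that is discontinuous at some point of `(0,∞)`. -/
theorem no_discontinuous_additive_nonneg :
    ¬ ∃ f : ℝ → ℝ, (∀ x > 0, 0 ≤ f x) ∧
      (∀ x > 0, ∀ y > 0, f (x + y) = f x + f y) ∧
      f 1 = 1 ∧
      ∃ x₀ > 0, ¬ ContinuousWithinAt f (Set.Ioi 0) x₀ := by
  rintro ⟨f, hnn, hadd, h1, x₀, hx₀, hdisc⟩
  -- monotonicity on positives
  have hmono : ∀ x y : ℝ, 0 < x → x < y → f x ≤ f y := by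
    intro x y hx hxy
    have h := hadd x hx (y - x) (by linarith)
    have hy : x + (y - x) = y := by ring
    rw [hy] at h
    have := hnn (y - x) (by linarith)
    linarith
  -- f (n * x) = n * f x for n ≥ 1
  have hnat : ∀ n : ℕ, ∀ x : ℝ, 0 < x → f ((n + 1) * x) = (n + 1) * f x := by
    intro n
    induction n with
    | zero => intro x hx; simp
    | succ k ih =>
      intro x hx
      have e1 : ((k + 1 : ℕ) + 1 : ℝ) * x = (k + 1) * x + x := by push_cast; ring
      have hkx : (0 : ℝ) < ((k : ℝ) + 1) * x := by positivity
      rw [e1, hadd _ hkx x hx, ih x hx]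
      push_cast; ring
  -- f q = q for positive rationals
  have hrat : ∀ q : ℚ, 0 < q → f q = q := by
    intro q hq
    have hd : (0 : ℝ) < (q.den : ℝ) := by exact_mod_cast q.pos
    have hqr : (0 : ℝ) < (q : ℝ) := by exact_mod_cast hq
    have hnum : ((q.num.toNat : ℤ) : ℝ) = (q.num : ℝ) := by
      exact_mod_cast Int.toNat_of_nonneg (le_of_lt (Rat.num_pos.mpr hq))
    have key : (q.den : ℝ) * f q = (q.den : ℝ) * (q : ℝ) := by
      obtain ⟨d, hd'⟩ : ∃ d : ℕ, q.den = d + 1 := ⟨q.den - 1, by have := q.pos; omega⟩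
      have e1 : (q.den : ℝ) * (q : ℝ) = (q.num : ℝ) := by
        rw [Rat.cast_def]; field_simp
      have e2 : f ((q.den : ℝ) * (q : ℝ)) = (q.den : ℝ) * f q := by
        rw [hd']; push_cast; exact hnat d q hqr
      rw [← e2, e1]
      -- f (q.num) = q.num
      have hnpos : 0 < q.num := Rat.num_pos.mpr hq
      obtain ⟨m, hm⟩ : ∃ m : ℕ, q.num.toNat = m + 1 := ⟨q.num.toNat - 1, by omega⟩
      have := hnat m 1 one_pos
      rw [h1, mul_one] at this
      have e3 : ((m : ℝ) + 1) = (q.num : ℝ) := by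
        rw [← hnum]; exact_mod_cast hm.symm
      rw [← e3, this, e3]
    have := mul_left_cancel₀ (ne_of_gt hd) key
    exact this
  -- f x = x for all x > 0
  have hid : ∀ x : ℝ, 0 < x → f x = x := by
    intro x hx
    by_contra hne
    rcases lt_or_gt_of_ne hne with hlt | hgt
    · -- f x < x : pick rational q with f x < q < x
      obtain ⟨q, hq1, hq2⟩ := exists_rat_btwn hlt
      have hq0 : (0 : ℚ) < q := by
        have : (0 : ℝ) ≤ f x := hnn x hx
        exact_mod_cast lt_of_le_of_lt this hq1
      have h1' : f q ≤ f x := hmono q x (by exact_mod_cast hq0) hq2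
      rw [hrat q hq0] at h1'
      linarith
    · -- x < f x : pick rational q with x < q < f x
      obtain ⟨q, hq1, hq2⟩ := exists_rat_btwn hgt
      have hq0 : (0 : ℚ) < q := by exact_mod_cast lt_trans hx hq1
      have h1' : f x ≤ f q := hmono x q hx hq1
      rw [hrat q hq0] at h1'
      linarith
  -- hence continuous at x₀ within Ioi 0
  apply hdisc
  have : ContinuousWithinAt (fun x : ℝ => x) (Set.Ioi 0) x₀ :=
    continuousWithinAt_id
  exact this.congr (fun y hy => hid y hy) (hid x₀ hx₀)
end

section
/- Let n ≥ 1 and let R : (0,∞)ⁿ × (0,∞)ⁿ → ℝ satisfy R(α+β, x) = R(α,x)·R(β,x) for all multi-orders α,β ∈ (0,∞)ⁿ and all x ∈ (0,∞)ⁿ; suppose R(α^(j), x) = ∏ᵢ xᵢ^(−αᵢ^(j)) for n linearly independent vectors α^(1),…,α^(n) ∈ (0,∞)ⁿ; and suppose for each x the map α ↦ R(α,x) is continuous at one point of (0,∞)ⁿ. Then R(α,x) = ∏ᵢ xᵢ^(−αᵢ) for all α,x ∈ (0,∞)ⁿ. -/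
/-!
Fix `x` and put `f α = R α x`, a multiplicative function on the open positive orthant `C`.
It is positive on `C`: `f a = f (a / 2) ^ 2 ≥ 0`, and `f a = 0` would force
`f ((m + 1) • A j) = f (A j) ^ (m + 1)` to vanish, since `(m + 1) • A j - a ∈ C` for large `m`.
So `log ∘ f` is additive on `C`, and as `C - C` is everything it extends to an additive map
`φ a = log f (a + s) - log f s` (any `s ∈ C` with `a + s ∈ C`). Continuity at one point makes `φ`
continuous, hence linear, and it agrees with `α ↦ -∑ i, α i * log (x i)` on the basis `A`.
-/

open Filter Set Matrix

section AddExtension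

variable {E G S : Type*} [AddCommGroup E] [AddCommGroup G] [SetLike S E] {C : S} {L : E → G}

theorem map_add_sub_map_eq_of_map_add (hL : ∀ a ∈ C, ∀ b ∈ C, L (a + b) = L a + L b) {a s t : E}
    (hs : s ∈ C) (ht : t ∈ C) (has : a + s ∈ C) (hat : a + t ∈ C) :
    L (a + s) - L s = L (a + t) - L t := by
  have h₁ := hL _ has _ ht
  have h₂ := hL _ hat _ hs
  rw [add_right_comm] at h₂
  rw [sub_eq_sub_iff_add_eq_add, ← h₁, h₂]

theorem exists_addMonoidHom_eqOn_of_map_add [AddMemClass S E] (hC : ∀ a, ∃ s ∈ C, a + s ∈ C)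
    (hL : ∀ a ∈ C, ∀ b ∈ C, L (a + b) = L a + L b) :
    ∃ φ : E →+ G, EqOn φ L C := by
  choose s hs has using hC
  refine ⟨AddMonoidHom.mk' (fun a => L (a + s a) - L (s a)) fun a b => ?_, fun a ha => ?_⟩
  · have hab : a + b + (s a + s b) = (a + s a) + (b + s b) := by abel
    rw [map_add_sub_map_eq_of_map_add hL (hs _) (add_mem (hs a) (hs b)) (has _)
      (hab ▸ add_mem (has a) (has b)), hab, hL _ (has a) _ (has b), hL _ (hs a) _ (hs b)]
    abel
  · simp only [AddMonoidHom.mk'_apply, hL _ ha _ (hs a), add_sub_cancel_right]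

end AddExtension

theorem AddMonoidHom.continuous_of_eqOn_of_continuousAt {E G : Type*} [AddGroup E]
    [TopologicalSpace E] [IsTopologicalAddGroup E] [AddGroup G] [TopologicalSpace G]
    [IsTopologicalAddGroup G] (φ : E →+ G) {L : E → G} {U : Set E} (hU : IsOpen U)
    (hφ : EqOn φ L U) {a₀ : E} (ha₀ : a₀ ∈ U) (hL : ContinuousAt L a₀) : Continuous φ := by
  have hφa₀ : ContinuousAt φ a₀ :=
    hL.congr (eventuallyEq_of_mem (hU.mem_nhds ha₀) fun a ha => (hφ ha).symm)
  refine continuous_of_continuousAt_zero φ ?_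
  have hshift : ContinuousAt (fun a => φ (a + a₀) - φ a₀) 0 :=
    (hφa₀.comp_of_eq (continuous_add_const a₀).continuousAt (zero_add a₀)).sub continuousAt_const
  simpa only [map_add, add_sub_cancel_right] using hshift

section Multiplicative

variable {E : Type*} [AddCommGroup E] [Module ℝ E] {C : ConvexCone ℝ E} {f : E → ℝ}

theorem map_natCast_add_one_smul_of_map_add_eq_mul
    (hf : ∀ a ∈ C, ∀ b ∈ C, f (a + b) = f a * f b) {p : E} (hp : p ∈ C) (m : ℕ) :
    f (((m : ℝ) + 1) • p) = f p ^ (m + 1) := by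
  induction m with
  | zero => simp
  | succ m ih =>
    rw [Nat.cast_succ, add_smul _ 1, one_smul, hf _ (C.smul_mem (by positivity) hp) _ hp, ih,
      ← pow_succ]

theorem nonneg_of_map_add_eq_mul (hf : ∀ a ∈ C, ∀ b ∈ C, f (a + b) = f a * f b) {a : E}
    (ha : a ∈ C) : 0 ≤ f a := by
  have hhalf : (2⁻¹ : ℝ) • a ∈ C := C.smul_mem (by norm_num) ha
  have hsplit : (2⁻¹ : ℝ) • a + (2⁻¹ : ℝ) • a = a := by rw [← add_smul]; norm_num
  rw [← hsplit, hf _ hhalf _ hhalf]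
  exact mul_self_nonneg _

theorem pos_of_map_add_eq_mul (hf : ∀ a ∈ C, ∀ b ∈ C, f (a + b) = f a * f b) {p : E}
    (hp : p ∈ C) (hfp : f p ≠ 0) (hunit : ∀ a ∈ C, ∃ m : ℕ, ((m : ℝ) + 1) • p - a ∈ C) {a : E}
    (ha : a ∈ C) : 0 < f a := by
  refine (nonneg_of_map_add_eq_mul hf ha).lt_of_ne fun hfa => ?_
  obtain ⟨m, hm⟩ := hunit a ha
  have h := map_natCast_add_one_smul_of_map_add_eq_mul hf hp m
  rw [← add_sub_cancel a (((m : ℝ) + 1) • p), hf _ ha _ hm, ← hfa, zero_mul] at h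
  exact pow_ne_zero _ hfp h.symm

end Multiplicative

def positiveOrthant (ι : Type*) : ConvexCone ℝ (ι → ℝ) where
  carrier := {a | ∀ i, 0 < a i}
  smul_mem' _ hc _ ha i := mul_pos hc (ha i)
  add_mem' _ ha _ hb i := add_pos (ha i) (hb i)

section PositiveOrthant

variable {ι : Type*} [Finite ι]

theorem isOpen_positiveOrthant : IsOpen (positiveOrthant ι : Set (ι → ℝ)) := by
  show IsOpen {a : ι → ℝ | ∀ i, 0 < a i}
  simpa only [← ofPred_forall] using
    isOpen_iInter_of_finite fun i => isOpen_lt continuous_const (continuous_apply i)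

theorem exists_natCast_add_one_smul_sub_mem_positiveOrthant {p : ι → ℝ}
    (hp : p ∈ positiveOrthant ι) (a : ι → ℝ) :
    ∃ m : ℕ, ((m : ℝ) + 1) • p - a ∈ positiveOrthant ι := by
  have hlarge : ∀ i, ∀ᶠ m : ℕ in atTop, a i < ((m : ℝ) + 1) * p i := fun i =>
    ((tendsto_natCast_atTop_atTop.atTop_add tendsto_const_nhds).atTop_mul_const
      (hp i)).eventually_gt_atTop (a i)
  obtain ⟨m, hm⟩ := (eventually_all.2 hlarge).exists
  exact ⟨m, fun i => by simpa using hm i⟩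

theorem exists_add_mem_positiveOrthant (a : ι → ℝ) :
    ∃ s ∈ positiveOrthant ι, a + s ∈ positiveOrthant ι := by
  have hone : (1 : ι → ℝ) ∈ positiveOrthant ι := fun _ => one_pos
  obtain ⟨m, hm⟩ := exists_natCast_add_one_smul_sub_mem_positiveOrthant hone (-a)
  refine ⟨((m : ℝ) + 1) • 1, (positiveOrthant ι).smul_mem (by positivity) hone, ?_⟩
  rwa [sub_neg_eq_add, add_comm] at hm

end PositiveOrthant

theorem prod_rpow_neg_eq_exp_dotProduct {ι : Type*} [Fintype ι] {x : ι → ℝ}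
    (hx : ∀ i, 0 < x i) (a : ι → ℝ) :
    ∏ i, x i ^ (-a i) = Real.exp ((fun i => -Real.log (x i)) ⬝ᵥ a) := by
  simp only [dotProduct, Real.exp_sum, Real.rpow_def_of_pos (hx _), neg_mul, mul_neg]

/-- Multidimensional Laplace-transform functional equation: the index law on
the positive orthant, prescribed values at `n` linearly independent order
vectors, and continuity at one point force `R α x = ∏ i, (x i) ^ (-α i)`. -/
theorem laplace_functional_equation_multidim
    (n : ℕ) (hn : 1 ≤ n)
    (R : (Fin n → ℝ) → (Fin n → ℝ) → ℝ)
    (A : Fin n → (Fin n → ℝ))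
    (hApos : ∀ j i, 0 < A j i)
    (hAind : LinearIndependent ℝ A)
    (hmul : ∀ α : Fin n → ℝ, (∀ i, 0 < α i) → ∀ β : Fin n → ℝ, (∀ i, 0 < β i) →
      ∀ x : Fin n → ℝ, (∀ i, 0 < x i) → R (α + β) x = R α x * R β x)
    (hid : ∀ j, ∀ x : Fin n → ℝ, (∀ i, 0 < x i) →
      R (A j) x = ∏ i, (x i) ^ (-(A j i)))
    (hcont : ∀ x : Fin n → ℝ, (∀ i, 0 < x i) →
      ∃ α₀ ∈ {α : Fin n → ℝ | ∀ i, 0 < α i},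
        ContinuousWithinAt (fun α => R α x) {α : Fin n → ℝ | ∀ i, 0 < α i} α₀) :
    ∀ α : Fin n → ℝ, (∀ i, 0 < α i) → ∀ x : Fin n → ℝ, (∀ i, 0 < x i) →
      R α x = ∏ i, (x i) ^ (-(α i)) := by
  intro α hα x hx
  let ψ := dotProductEquiv ℝ (Fin n) fun i => -Real.log (x i)
  have hR : ∀ a ∈ positiveOrthant (Fin n), ∀ b ∈ positiveOrthant (Fin n),
      R (a + b) x = R a x * R b x := fun a ha b hb => hmul a ha b hb x hx
  have hA : ∀ j, A j ∈ positiveOrthant (Fin n) := hApos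
  let j₀ : Fin n := ⟨0, hn⟩
  have hpos : ∀ a ∈ positiveOrthant (Fin n), 0 < R a x := fun a =>
    pos_of_map_add_eq_mul (f := (R · x)) hR (hA j₀)
      (by rw [hid j₀ x hx, prod_rpow_neg_eq_exp_dotProduct hx]; exact (Real.exp_pos _).ne')
      fun a _ => exists_natCast_add_one_smul_sub_mem_positiveOrthant (hA j₀) a
  obtain ⟨φ, hφ⟩ := exists_addMonoidHom_eqOn_of_map_add (L := fun a => Real.log (R a x))
    exists_add_mem_positiveOrthant fun a ha b hb => by
      rw [hR a ha b hb, Real.log_mul (hpos a ha).ne' (hpos b hb).ne']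
  obtain ⟨α₀, hα₀, hcontα₀⟩ := hcont x hx
  have hφc : Continuous φ := φ.continuous_of_eqOn_of_continuousAt isOpen_positiveOrthant hφ hα₀
    ((hcontα₀.continuousAt (isOpen_positiveOrthant.mem_nhds hα₀)).log (hpos α₀ hα₀).ne')
  have : Nonempty (Fin n) := ⟨j₀⟩
  have hφψ : (φ.toRealLinearMap hφc : (Fin n → ℝ) →ₗ[ℝ] ℝ) = ψ :=
    LinearMap.ext_on_range (hAind.span_eq_top_of_card_eq_finrank (by simp)) fun j => by
      simp [hφ (hA j), hid j x hx, prod_rpow_neg_eq_exp_dotProduct hx, ψ]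
  calc R α x = Real.exp (φ α) := by simp only [hφ hα, Real.exp_log (hpos α hα)]
    _ = Real.exp (ψ α) := by rw [← hφψ]; rfl
    _ = ∏ i, x i ^ (-α i) := (prod_rpow_neg_eq_exp_dotProduct hx α).symm
end

section
/- Fix a Hamel basis of ℝ over ℚ containing π and π+1. For α > 0 write α = q₁b_{λ₁} + … + q_s b_{λ_s} uniquely with rational qⱼ and basis elements b_{λⱼ}, and define σ(α) = q₁ + … + q_s (the sum of rational coordinates). Then σ : (0,∞) → ℚ satisfies σ(α+β) = σ(α) + σ(β) for all α,β > 0, σ(1) = 0, σ(q) = 0 for all positive rationals q, and σ is not identically zero (e.g. σ(π) = 1); in particular σ is discontinuous. -/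
/-!
Since `π` is irrational, `π` and `π + 1` are `ℚ`-linearly independent and extend to a Hamel basis.
The coordinate sum is the `ℚ`-linear functional sending every basis vector to `1`, so it
vanishes at `1 = (π + 1) - π` and hence on `ℚ`, while it equals `1` on the dense set `ℚ + π`;
a function that is `0` on one dense set and `1` on another is continuous nowhere.
-/

open Real

theorem Irrational.linearIndepOn_pair_self_add_one {x : ℝ} (hx : Irrational x) :
    LinearIndepOn ℚ id ({x, x + 1} : Set ℝ) := by
  refine linearIndepOn_id_pair hx.ne_zero fun a ha => hx ?_
  have hx' : ((a : ℝ) - 1) * x = 1 := by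
    rw [Rat.smul_def] at ha
    linear_combination ha
  exact ⟨(a - 1)⁻¹, by push_cast; exact inv_eq_of_mul_eq_one_right hx'⟩

theorem Module.Basis.constr_const_one_apply {ι R M : Type*} [CommSemiring R] [AddCommMonoid M]
    [Module R M] (b : Module.Basis ι R M) (x : M) :
    b.constr R (fun _ => (1 : R)) x = (b.repr x).sum fun _ q => q := by
  simp [Module.Basis.constr_apply]

theorem LinearMap.map_ratCast_real_eq_zero {M : Type*} [AddCommGroup M] [Module ℚ M]
    (f : ℝ →ₗ[ℚ] M) (h₁ : f 1 = 0) (q : ℚ) : f q = 0 := by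
  rw [← Rat.smul_one_eq_cast, map_smul, h₁, smul_zero]

theorem ContinuousWithinAt.eq_of_denseRange {X Y α : Type*} [TopologicalSpace X]
    [TopologicalSpace Y] [T1Space Y] {f : X → Y} {s : Set X} {x : X} {g : α → X} {c : Y}
    (hf : ContinuousWithinAt f s x) (hs : IsOpen s) (hx : x ∈ s) (hg : DenseRange g)
    (hc : ∀ a, g a ∈ s → f (g a) = c) : f x = c := by
  have hmem : f x ∈ closure (f '' (s ∩ Set.range g)) :=
    (hf.mono Set.inter_subset_left).mem_closure_image (hg.open_subset_closure_inter hs hx)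
  have himage : f '' (s ∩ Set.range g) ⊆ {c} := by
    rintro _ ⟨_, ⟨hy, a, rfl⟩, rfl⟩
    exact hc a hy
  simpa using closure_mono himage hmem

theorem LinearMap.not_continuousWithinAt_real_of_map_one_eq_zero (f : ℝ →ₗ[ℚ] ℚ) (h₁ : f 1 = 0)
    {x : ℝ} (hx : f x ≠ 0) {s : Set ℝ} (hs : IsOpen s) {x₀ : ℝ} (hx₀ : x₀ ∈ s) :
    ¬ ContinuousWithinAt (fun y => (f y : ℝ)) s x₀ := by
  intro hf
  have hzero : (f x₀ : ℝ) = 0 :=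
    hf.eq_of_denseRange hs hx₀ Rat.denseRange_cast fun q _ => by
      simp [f.map_ratCast_real_eq_zero h₁]
  have htranslate : DenseRange fun q : ℚ => (q : ℝ) + x :=
    (Homeomorph.addRight x).surjective.denseRange.comp Rat.denseRange_cast
      (Homeomorph.addRight x).continuous
  have hshift : (f x₀ : ℝ) = f x :=
    hf.eq_of_denseRange hs hx₀ htranslate fun q _ => by
      simp [f.map_ratCast_real_eq_zero h₁]
  exact hx (by exact_mod_cast hshift.symm.trans hzero)

/-- There is a Hamel basis of `ℝ` over `ℚ` containing `π` and `π + 1`, and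
the coordinate-sum map `σ(α) = Σⱼ qⱼ` (where `α = Σⱼ qⱼ b_{λⱼ}`) is additive,
vanishes at `1` and at every positive rational, satisfies `σ(π) = 1`, and is
discontinuous (indeed at every point of `(0,∞)`). -/
theorem hamel_basis_coordinate_sum :
    ∃ (ι : Type) (b : Module.Basis ι ℚ ℝ), π ∈ Set.range b ∧ (π + 1) ∈ Set.range b ∧
      ∀ σ : ℝ → ℚ, (σ = fun α => (b.repr α).sum fun _ q => q) →
        (∀ α > (0:ℝ), ∀ β > (0:ℝ), σ (α + β) = σ α + σ β) ∧
        σ 1 = 0 ∧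
        (∀ q : ℚ, 0 < q → σ (q : ℝ) = 0) ∧
        σ π = 1 ∧
        ∀ x₀ > (0:ℝ), ¬ ContinuousWithinAt (fun x => (σ x : ℝ)) (Set.Ioi 0) x₀ := by
  have hli := irrational_pi.linearIndepOn_pair_self_add_one
  let b := Module.Basis.extend hli
  have hrange : {π, π + 1} ⊆ Set.range b := by
    rw [Module.Basis.range_extend]
    exact hli.subset_extend _
  have hπ : π ∈ Set.range b := hrange (by simp)
  have hπ₁ : π + 1 ∈ Set.range b := hrange (by simp)
  refine ⟨_, b, hπ, hπ₁, fun σ hσ => ?_⟩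
  set f := b.constr ℚ fun _ => (1 : ℚ)
  obtain rfl : σ = fun x => f x := by simp only [hσ, f, b.constr_const_one_apply]
  have hbasis : ∀ y ∈ Set.range b, f y = 1 := by
    rintro _ ⟨i, rfl⟩
    exact b.constr_basis ℚ _ i
  have h₁ : f 1 = 0 := by
    have := map_add f π 1
    rw [hbasis _ hπ, hbasis _ hπ₁] at this
    linarith
  have hfπ : f π = 1 := hbasis _ hπ
  exact ⟨fun α _ β _ => map_add f α β, h₁, fun q _ => f.map_ratCast_real_eq_zero h₁ q, hfπ,
    fun x₀ hx₀ => f.not_continuousWithinAt_real_of_map_one_eq_zero h₁ (x := π) (by simp [hfπ])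
      isOpen_Ioi hx₀⟩
end
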